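/- Let A be a countably infinite alphabet and F = {a_1a_1, a_1a_2} ⊆ A². Then the shift of finite type X_F is not conjugate, via any eventually finite periodic conjugacy, to the edge shift of any directed graph. -/

import Mathlib

namespace OTW

/-- The Ott–Tomforde–Willis full shift over `A`, modelled as the set of "gap-free"
functions `ℕ → Option A`: finite words are eventually `none`, infinite sequences never. -/
def FullShift (A : Type*) : Set (ℕ → Option A) :=
  {x | ∀ n, x n = none → x (n + 1) = none}

variable {A : Type*}

/-- The finite word `l` as an element of the full shift. -/
def ofList (l : List A) : ℕ → Option A :=
  fun n => if h : n < l.length then some (l.get ⟨n, h⟩) else none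

theorem ofList_mem (l : List A) : ofList l ∈ FullShift A := by
  intro n hn
  by_cases h : n < l.length
  · simp [ofList, h] at hn
  · simp only [ofList]
    rw [dif_neg (by omega)]

/-- The infinite sequence `y` as an element of the full shift. -/
def ofSeq (y : ℕ → A) : ℕ → Option A := fun n => some (y n)

theorem ofSeq_mem (y : ℕ → A) : ofSeq y ∈ FullShift A := by
  intro n hn
  simp [ofSeq] at hn

/-- Truncation of `x` to its first `p` letters. -/
def trunc (p : ℕ) (x : ℕ → Option A) : ℕ → Option A := fun n => if n < p then x n else none

theorem trunc_mem {x : ℕ → Option A} (hx : x ∈ FullShift A) (p : ℕ) :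
    trunc p x ∈ FullShift A := by
  intro n hn
  simp only [trunc] at hn ⊢
  by_cases h : n + 1 < p
  · rw [if_pos h]
    rw [if_pos (by omega)] at hn
    exact hx n hn
  · rw [if_neg h]

/-- Generalized cylinder set `Z(w, F)`: sequences extending the finite word `w` whose
next letter (if any) is not in the finite set `F`. -/
def Cyl (w : List A) (F : Finset A) : Set (ℕ → Option A) :=
  {x | (∀ i (h : i < w.length), x i = some (w.get ⟨i, h⟩)) ∧ ∀ a ∈ F, x w.length ≠ some a}

/-- The topology on the full shift generated by the generalized cylinder sets. -/
instance instTopoFullShift (A : Type*) : TopologicalSpace ↥(FullShift A) :=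
  TopologicalSpace.generateFrom {S | ∃ w F, S = Subtype.val ⁻¹' Cyl w F}

/-- The shift map on the full shift. -/
def shiftMap (x : ↥(FullShift A)) : ↥(FullShift A) :=
  ⟨fun n => x.1 (n + 1), fun n hn => x.2 (n + 1) hn⟩

/-- The length of an element of the full shift, valued in `ℕ∞`. -/
noncomputable def len (x : ℕ → Option A) : ℕ∞ := ⨅ n ∈ {n | x n = none}, (n : ℕ∞)

/-- `x` is an infinite sequence. -/
def IsInf (x : ℕ → Option A) : Prop := ∀ n, x n ≠ none

/-- The word `w` occurs in `x` at position `k`. -/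
def hasBlockAt (x : ℕ → Option A) (w : List A) (k : ℕ) : Prop :=
  ∀ i (h : i < w.length), x (k + i) = some (w.get ⟨i, h⟩)

/-- `X_F^inf` : infinite sequences avoiding all blocks from `F`. -/
def XFinf (F : Set (List A)) : Set (ℕ → Option A) :=
  {x | IsInf x ∧ ∀ w ∈ F, ∀ k, ¬ hasBlockAt x w k}

/-- Concatenation of a finite word with an infinite sequence. -/
def listCat (w : List A) (y : ℕ → A) : ℕ → Option A :=
  fun n => if h : n < w.length then some (w.get ⟨n, h⟩) else some (y (n - w.length))

/-- `X_F^fin` : finite words admitting infinitely many one-letter extensions to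
elements of `X_F^inf`. -/
def XFfin (F : Set (List A)) : Set (ℕ → Option A) :=
  {x | ∃ w : List A, x = ofList w ∧
    {a : A | ∃ y : ℕ → A, listCat (w ++ [a]) y ∈ XFinf F}.Infinite}

/-- The shift space `X_F` determined by the forbidden words `F`. -/
def XF (F : Set (List A)) : Set (ℕ → Option A) := XFinf F ∪ XFfin F

/-- An ultragraph: sources are vertices, ranges are sets of vertices. -/
structure Ultragraph (V E : Type*) where
  s : E → V
  r : E → Set V

/-- The set of infinite paths of an ultragraph. -/
def Ginf {V E : Type*} (G : Ultragraph V E) : Set (ℕ → Option E) :=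
  {x | IsInf x ∧ ∀ n e f, x n = some e → x (n + 1) = some f → G.s f ∈ G.r e}

/-- The edge shift of an ultragraph: the closure of the set of infinite paths. -/
def edgeShift {V E : Type*} (G : Ultragraph V E) : Set ↥(FullShift E) :=
  closure {x : ↥(FullShift E) | x.1 ∈ Ginf G}

/-- A (nonempty) finite path in an ultragraph. -/
def IsPath {V E : Type*} (G : Ultragraph V E) (l : List E) : Prop :=
  l ≠ [] ∧ l.Chain' (fun e f => G.s f ∈ G.r e)

/-- A directed graph. -/
structure DirGraph (V E : Type*) where
  s : E → V
  r : E → V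

/-- A directed graph viewed as an ultragraph. -/
def DirGraph.toUltragraph {V E : Type*} (G : DirGraph V E) : Ultragraph V E :=
  ⟨G.s, fun e => {G.r e}⟩

/-- The length-one word `e` as an element of the full shift. -/
def word1 (e : A) : ↥(FullShift A) := ⟨ofList [e], ofList_mem _⟩

/-- A conjugacy between shift spaces: a length-preserving, shift-commuting, continuous
bijection (between shift-invariant subsets). -/
structure IsConjugacy {A B : Type*} (X : Set ↥(FullShift A)) (Y : Set ↥(FullShift B))
    (φ : ↥X → ↥Y) : Prop where
  shiftInvX : ∀ x : ↥X, shiftMap x.1 ∈ X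
  shiftInvY : ∀ y : ↥Y, shiftMap y.1 ∈ Y
  bijective : Function.Bijective φ
  continuous : Continuous φ
  shift_comm : ∀ x : ↥X, (φ ⟨shiftMap x.1, shiftInvX x⟩).1 = shiftMap (φ x).1
  len_eq : ∀ x : ↥X, len (φ x).1.1 = len x.1.1

/-- An eventually finite periodic conjugacy: for some `p ≥ 2`, the initial block of
length `p` of every `p`-periodic point is mapped to the initial block of length `p`
of its image. -/
def EvFinPeriodic {A B : Type*} {X : Set ↥(FullShift A)} {Y : Set ↥(FullShift B)}
    (φ : ↥X → ↥Y) : Prop :=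
  ∃ p : ℕ, 2 ≤ p ∧ ∀ x : ↥X, IsInf x.1.1 → (∀ k, x.1.1 (k + p) = x.1.1 k) →
    ∀ h : (⟨trunc p x.1.1, trunc_mem x.1.2 p⟩ : ↥(FullShift A)) ∈ X,
      ∀ i < p, (φ ⟨⟨trunc p x.1.1, trunc_mem x.1.2 p⟩, h⟩).1.1 i = (φ x).1.1 i

/-- The range of a finite path (`univ` for the empty path). -/
def rng {V E : Type*} (G : Ultragraph V E) (l : List E) : Set V :=
  (l.getLast?.map G.r).getD Set.univ

/-- The set `X_{ab⁻¹}` of the partial action: elements of the edge shift beginning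
with `a` whose next edge (if any) has source in `r(a) ∩ r(b)`. -/
def XwS {V E : Type*} (G : Ultragraph V E) (a b : List E) : Set ↥(FullShift E) :=
  {x | x ∈ edgeShift G ∧ (∀ i (h : i < a.length), x.1 i = some (a.get ⟨i, h⟩)) ∧
    ∀ e, x.1 a.length = some e → G.s e ∈ rng G a ∩ rng G b}

/-- The map `θ_{ba⁻¹}` (raw version): replaces the initial block `a` by `b`. -/
def theta {E : Type*} (a b : List E) (x : ℕ → Option E) : ℕ → Option E :=
  fun n => if h : n < b.length then some (b.get ⟨n, h⟩) else x (n - b.length + a.length)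

theorem theta_mem {E : Type*} {x : ℕ → Option E} (hx : x ∈ FullShift E) (a b : List E) :
    theta a b x ∈ FullShift E := by
  intro n hn
  simp only [theta] at hn ⊢
  split at hn
  · simp at hn
  · rename_i h
    rw [dif_neg (by omega)]
    have h2 : n + 1 - b.length + a.length = (n - b.length + a.length) + 1 := by omega
    rw [h2]
    exact hx _ hn

/-- The map `θ_{ba⁻¹}` as a self-map of the full shift. -/
def thetaF {E : Type*} (a b : List E) (x : ↥(FullShift E)) : ↥(FullShift E) :=
  ⟨theta a b x.1, theta_mem x.2 a b⟩

/-- A valid pair `(a, b)` representing the reduced group element `ab⁻¹` of the set `V`. -/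
def ValidPair {V E : Type*} (G : Ultragraph V E) (a b : List E) : Prop :=
  (a = [] ∨ IsPath G a) ∧ (b = [] ∨ IsPath G b) ∧ (rng G a ∩ rng G b).Nonempty ∧
  ∀ (ha : a ≠ []) (hb : b ≠ []), a.getLast ha ≠ b.getLast hb

/-- The element `ab⁻¹` of the free group on the edges. -/
def pf {E : Type*} (a b : List E) : FreeGroup E :=
  (a.map FreeGroup.of).prod * ((b.map FreeGroup.of).prod)⁻¹


section Helpers

variable {A : Type*}

theorem none_of_none_le {x : ℕ → Option A} (hx : x ∈ FullShift A) {m n : ℕ}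
    (hm : x m = none) (hmn : m ≤ n) : x n = none := by
  induction n, hmn using Nat.le_induction with
  | base => exact hm
  | succ n hn ih => exact hx n ih

theorem len_eq_top_iff {x : ℕ → Option A} : len x = ⊤ ↔ IsInf x := by
  simp only [len, IsInf, Set.mem_setOf_eq, iInf_eq_top]
  constructor
  · intro h n hn
    have := h n hn
    exact (WithTop.natCast_ne_top n) this
  · intro h n hn
    exact absurd hn (h n)

theorem len_le_of_none {x : ℕ → Option A} {n : ℕ} (hn : x n = none) : len x ≤ n := by
  exact iInf₂_le n hn

theorem le_len {x : ℕ → Option A} {n : ℕ} (h : ∀ m, x m = none → n ≤ m) :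
    (n : ℕ∞) ≤ len x := by
  refine le_iInf₂ fun m hm => ?_
  exact_mod_cast h m hm

theorem len_ofList_singleton (c : A) : len (ofList [c]) = 1 := by
  apply le_antisymm
  · exact len_le_of_none (by simp [ofList])
  · refine le_len fun m hm => ?_
    rcases Nat.eq_zero_or_pos m with rfl | h
    · simp [ofList] at hm
    · exact h

theorem eq_ofList_singleton_of_len_eq_one {y : ℕ → Option A} (hy : y ∈ FullShift A)
    (h1 : len y = 1) : ∃ e : A, y = ofList [e] := by
  have hy0 : y 0 ≠ none := by
    intro h
    have := len_le_of_none h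
    rw [h1] at this
    exact absurd this (by norm_num)
  have hy1 : y 1 = none := by
    by_contra h
    have h2 : (2 : ℕ∞) ≤ len y := by
      refine le_len fun m hm => ?_
      match m with
      | 0 => exact absurd hm hy0
      | 1 => exact absurd hm h
      | (k+2) => exact Nat.le_add_left 2 k
    rw [h1] at h2
    norm_num at h2
  obtain ⟨e, he⟩ := Option.ne_none_iff_exists'.mp hy0
  refine ⟨e, funext fun n => ?_⟩
  match n with
  | 0 => simp [ofList, he]
  | (k+1) =>
    have : y (k+1) = none := none_of_none_le hy hy1 (by omega)
    simp only [ofList, List.length_cons, List.length_nil]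
    rw [dif_neg (by omega), this]

end Helpers

-- HH2

section Helpers2

theorem mem_ginf_of_isInf {V E : Type*} (G : Ultragraph V E) {x : ↥(FullShift E)}
    (hx : x ∈ edgeShift G) (hinf : IsInf x.1) : x.1 ∈ Ginf G := by
  refine ⟨hinf, fun n e f he hf => ?_⟩
  classical
  set w : List E := List.ofFn
    (fun i : Fin (n+2) => (x.1 i).get (Option.ne_none_iff_isSome.mp (hinf i))) with hw
  have hwlen : w.length = n + 2 := List.length_ofFn
  have hxw : ∀ i (h : i < w.length), x.1 i = some (w.get ⟨i, h⟩) := by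
    intro i h
    rw [List.get_eq_getElem]
    simp only [hw, List.getElem_ofFn]
    exact (Option.some_get _).symm
  have hopen : IsOpen (Subtype.val ⁻¹' Cyl w (∅ : Finset E) : Set ↥(FullShift E)) :=
    TopologicalSpace.GenerateOpen.basic _ ⟨w, ∅, rfl⟩
  have hmem : x ∈ Subtype.val ⁻¹' Cyl w (∅ : Finset E) := ⟨hxw, by simp⟩
  obtain ⟨z, hz1, hz2⟩ := mem_closure_iff.mp hx _ hopen hmem
  have hze : z.1 n = some e := by
    have h1 := hz1.1 n (by omega)
    rw [h1, ← hxw n (by omega)]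
    exact he
  have hzf : z.1 (n+1) = some f := by
    have h1 := hz1.1 (n+1) (by omega)
    rw [h1, ← hxw (n+1) (by omega)]
    exact hf
  exact hz2.2 n e f hze hzf

theorem word_mem_XF {A : Type*} [Infinite A] (a1 a2 : A) (w : List A)
    (hw : ∀ (i : ℕ) (h1 : i < w.length) (h2 : i + 1 < w.length),
      ¬(w.get ⟨i, h1⟩ = a1 ∧ (w.get ⟨i+1, h2⟩ = a1 ∨ w.get ⟨i+1, h2⟩ = a2))) :
    ofList w ∈ XF {v : List A | v = [a1, a1] ∨ v = [a1, a2]} := by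
  right
  refine ⟨w, rfl, ?_⟩
  have hsub : {a : A | a ≠ a1 ∧ a ≠ a2} ⊆
      {a : A | ∃ y, listCat (w ++ [a]) y ∈
        XFinf {v : List A | v = [a1, a1] ∨ v = [a1, a2]}} := by
    intro a ha
    refine ⟨fun _ => a, ?_, ?_⟩
    · intro n
      simp only [listCat]
      split <;> exact Option.some_ne_none _
    · have hLw : ∀ n (h : n < w.length), listCat (w ++ [a]) (fun _ => a) n =
          some (w.get ⟨n, h⟩) := by
        intro n h
        simp only [listCat]
        rw [dif_pos (by simp; omega)]
        congr 1
        rw [List.get_eq_getElem, List.get_eq_getElem, List.getElem_append_left]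
      have hLa : ∀ n, w.length ≤ n → listCat (w ++ [a]) (fun _ => a) n = some a := by
        intro n h
        simp only [listCat]
        by_cases h2 : n < (w ++ [a]).length
        · rw [dif_pos h2]
          have : n = w.length := by simp at h2; omega
          subst this
          rw [List.get_eq_getElem]
          congr 1
          rw [List.getElem_append_right (Nat.le_refl w.length)]
          simp
        · rw [dif_neg h2]
      rintro v hv k hB
      have hF : ∃ t, (t = a1 ∨ t = a2) ∧
          listCat (w ++ [a]) (fun _ => a) k = some a1 ∧
          listCat (w ++ [a]) (fun _ => a) (k+1) = some t := by
        rcases hv with rfl | rfl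
        · refine ⟨a1, Or.inl rfl, ?_, ?_⟩
          · have := hB 0 (by norm_num); simpa using this
          · have := hB 1 (by norm_num); simpa using this
        · refine ⟨a2, Or.inr rfl, ?_, ?_⟩
          · have := hB 0 (by norm_num); simpa using this
          · have := hB 1 (by norm_num); simpa using this
      obtain ⟨t, ht, hk0, hk1⟩ := hF
      by_cases h1 : w.length ≤ k
      · rw [hLa k h1] at hk0
        exact ha.1 (Option.some_injective _ hk0)
      · push_neg at h1
        by_cases h2 : k + 1 < w.length
        · rw [hLw k h1] at hk0
          rw [hLw (k+1) h2] at hk1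
          exact hw k h1 h2 ⟨Option.some_injective _ hk0, by
            rcases ht with rfl | rfl
            · exact Or.inl (Option.some_injective _ hk1)
            · exact Or.inr (Option.some_injective _ hk1)⟩
        · rw [hLa (k+1) (by omega)] at hk1
          have : a = t := Option.some_injective _ hk1
          rcases ht with rfl | rfl
          · exact ha.1 this
          · exact ha.2 this
  refine Set.Infinite.mono hsub ?_
  have : {a : A | a ≠ a1 ∧ a ≠ a2} = ({a1, a2} : Set A)ᶜ := by
    ext a; simp [not_or]
  rw [this]
  exact Set.Finite.infinite_compl ((Set.finite_singleton a2).insert a1)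

end Helpers2

-- HH3

section Helpers3

variable {A : Type*}

/-- Iterated shift on the full shift. -/
def shiftN (j : ℕ) (x : ↥(FullShift A)) : ↥(FullShift A) :=
  ⟨fun n => x.1 (n + j), fun n hn => by
    show x.1 (n + 1 + j) = none
    have h1 := x.2 (n + j) hn
    have h2 : n + 1 + j = n + j + 1 := by omega
    rw [h2]
    exact h1⟩

theorem shiftN_zero (x : ↥(FullShift A)) : shiftN 0 x = x := rfl

theorem shiftN_succ (j : ℕ) (x : ↥(FullShift A)) :
    shiftN (j + 1) x = shiftMap (shiftN j x) := by
  apply Subtype.ext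
  funext n
  show x.1 (n + (j + 1)) = x.1 (n + 1 + j)
  exact congrArg x.1 (by omega)

/-- forbidden-word set -/
abbrev FF {A : Type*} (a1 a2 : A) : Set (List A) := {w : List A | w = [a1, a1] ∨ w = [a1, a2]}

/-- the SFT as a subset of the full shift -/
abbrev XX {A : Type*} (a1 a2 : A) : Set ↥(FullShift A) :=
  {x : ↥(FullShift A) | x.1 ∈ XF (FF a1 a2)}

end Helpers3

/-- the shift of finite type with forbidden words `{a₁a₁, a₁a₂}` over a
countably infinite alphabet is not conjugate, via an eventually finite periodic
conjugacy, to the edge shift of any directed graph. -/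
theorem SFT_not_evFinPeriodic_conjugate_to_graph {A : Type*} [Countable A] [Infinite A]
    (a1 a2 : A) (h12 : a1 ≠ a2) {V E : Type*} [Countable V] [Countable E]
    (G : DirGraph V E)
    (phi : ↥{x : ↥(FullShift A) | x.1 ∈ XF {w : List A | w = [a1, a1] ∨ w = [a1, a2]}} →
      ↥(edgeShift G.toUltragraph)) :
    ¬ (IsConjugacy {x : ↥(FullShift A) | x.1 ∈ XF {w : List A | w = [a1, a1] ∨ w = [a1, a2]}}
        (edgeShift G.toUltragraph) phi ∧ EvFinPeriodic phi) := by
  classical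
  rintro ⟨hc, p, hp2, hev⟩
  -- membership of single-letter words
  have hXc : ∀ c : A, (⟨ofList [c], ofList_mem _⟩ : ↥(FullShift A)) ∈ XX a1 a2 := by
    intro c
    show ofList [c] ∈ XF (FF a1 a2)
    apply word_mem_XF
    intro i h1 h2
    simp only [List.length_cons, List.length_nil] at h2
    omega
  set xc : A → ↥(XX a1 a2) := fun c => ⟨⟨ofList [c], ofList_mem _⟩, hXc c⟩ with hxcdef
  -- phi only depends on the underlying function
  have phic : ∀ x y : ↥(XX a1 a2), x.1.1 = y.1.1 → phi x = phi y := by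
    intro x y h
    have hxy : x = y := Subtype.ext (Subtype.ext h)
    rw [hxy]
  -- membership of iterated shifts
  have hmemN : ∀ (j : ℕ) (x : ↥(XX a1 a2)), shiftN j x.1 ∈ XX a1 a2 := by
    intro j
    induction j with
    | zero => intro x; rw [shiftN_zero]; exact x.2
    | succ j ih =>
      intro x
      rw [shiftN_succ]
      exact hc.shiftInvX ⟨shiftN j x.1, ih x⟩
  -- phi commutes with iterated shifts
  have hphiN : ∀ (j : ℕ) (x : ↥(XX a1 a2)) (hm : shiftN j x.1 ∈ XX a1 a2) (n : ℕ),
      (phi ⟨shiftN j x.1, hm⟩).1.1 n = (phi x).1.1 (n + j) := by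
    intro j
    induction j with
    | zero =>
      intro x hm n
      rw [phic ⟨shiftN 0 x.1, hm⟩ x (congrArg Subtype.val (shiftN_zero x.1))]
      rfl
    | succ j ih =>
      intro x hm n
      have e1 : phi ⟨shiftN (j+1) x.1, hm⟩ =
          phi ⟨shiftMap (shiftN j x.1), hc.shiftInvX ⟨shiftN j x.1, hmemN j x⟩⟩ :=
        phic _ _ (congrArg Subtype.val (shiftN_succ j x.1))
      rw [e1]
      have e2 := hc.shift_comm ⟨shiftN j x.1, hmemN j x⟩
      calc (phi ⟨shiftMap (shiftN j x.1), hc.shiftInvX ⟨shiftN j x.1, hmemN j x⟩⟩).1.1 n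
          = (phi ⟨shiftN j x.1, hmemN j x⟩).1.1 (n+1) :=
            congrFun (congrArg Subtype.val e2) n
        _ = (phi x).1.1 (n+1+j) := ih x (hmemN j x) (n+1)
        _ = (phi x).1.1 (n+(j+1)) := congrArg _ (by omega)
  -- the letter map e : A → E
  have hEex : ∀ c : A, ∃ ec : E, (phi (xc c)).1.1 = ofList [ec] := by
    intro c
    have hlen := hc.len_eq (xc c)
    have hlc : len (xc c).1.1 = 1 := len_ofList_singleton c
    rw [hlc] at hlen
    exact eq_ofList_singleton_of_len_eq_one (phi (xc c)).1.2 hlen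
  choose e he using hEex
  have hEinj : ∀ c c' : A, e c = e c' → c = c' := by
    intro c c' h
    have h1 : phi (xc c) = phi (xc c') :=
      Subtype.ext (Subtype.ext (by rw [he c, he c', h]))
    have h2 := hc.bijective.1 h1
    have h3 : ofList [c] = ofList [c'] := congrArg (fun t => t.1.1) h2
    have h4 := congrFun h3 0
    simpa [ofList] using h4
  -- last letter of the image of a length-p word
  have hlast : ∀ (w : List A) (hwX : ofList w ∈ XF (FF a1 a2)) (hwp : w.length = p)
      (π : p - 1 < w.length),
      (phi ⟨⟨ofList w, ofList_mem w⟩, hwX⟩).1.1 (p-1) = some (e (w.get ⟨p-1, π⟩)) := by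
    intro w hwX hwp π
    have hm := hmemN (p-1) ⟨⟨ofList w, ofList_mem w⟩, hwX⟩
    have h1 := hphiN (p-1) ⟨⟨ofList w, ofList_mem w⟩, hwX⟩ hm 0
    have h2 : shiftN (p-1) (⟨ofList w, ofList_mem w⟩ : ↥(FullShift A)) =
        ⟨ofList [w.get ⟨p-1, π⟩], ofList_mem _⟩ := by
      apply Subtype.ext
      funext n
      show ofList w (n + (p-1)) = ofList [w.get ⟨p-1, π⟩] n
      match n with
      | 0 =>
        simp only [ofList, List.length_cons, List.length_nil]
        rw [dif_pos (show 0 + (p-1) < w.length by omega), dif_pos (by omega)]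
        have hfin : (⟨0 + (p-1), show 0 + (p-1) < w.length by omega⟩ : Fin w.length) =
            ⟨p-1, π⟩ := Fin.ext (Nat.zero_add _)
        rw [hfin]
        rfl
      | (k+1) =>
        simp only [ofList, List.length_cons, List.length_nil]
        rw [dif_neg (by omega), dif_neg (by omega)]
    have h3 : phi ⟨shiftN (p-1) (⟨ofList w, ofList_mem w⟩ : ↥(FullShift A)), hm⟩ =
        phi (xc (w.get ⟨p-1, π⟩)) := phic _ _ (congrArg Subtype.val h2)
    calc (phi ⟨⟨ofList w, ofList_mem w⟩, hwX⟩).1.1 (p-1)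
        = (phi ⟨⟨ofList w, ofList_mem w⟩, hwX⟩).1.1 (0 + (p-1)) := by rw [Nat.zero_add]
      _ = (phi ⟨shiftN (p-1) (⟨ofList w, ofList_mem w⟩ : ↥(FullShift A)), hm⟩).1.1 0 :=
          h1.symm
      _ = (phi (xc (w.get ⟨p-1, π⟩))).1.1 0 := by rw [h3]
      _ = some (e (w.get ⟨p-1, π⟩)) := by rw [he]; simp [ofList]
  -- periodicity of the image
  have hper_phi : ∀ (x : ↥(XX a1 a2)), (∀ k, x.1.1 (k + p) = x.1.1 k) →
      ∀ n, (phi x).1.1 (n + p) = (phi x).1.1 n := by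
    intro x hper n
    have hm : shiftN p x.1 ∈ XX a1 a2 := hmemN p x
    have h1 := hphiN p x hm n
    have h2 : (⟨shiftN p x.1, hm⟩ : ↥(XX a1 a2)) = x :=
      Subtype.ext (Subtype.ext (funext fun k => hper k))
    rw [h2] at h1
    exact h1.symm
  -- infinite elements of X are in XFinf
  have hXinfOf : ∀ x : ↥(XX a1 a2), IsInf x.1.1 → x.1.1 ∈ XFinf (FF a1 a2) := by
    intro x hinf
    rcases x.2 with h | h
    · exact h
    · obtain ⟨w, hw, -⟩ := h
      exfalso
      apply hinf w.length
      rw [hw]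
      simp [ofList]
  -- MAIN LEMMA: on infinite p-periodic points, phi acts letterwise by e
  have hmain : ∀ (x : ↥(XX a1 a2)), IsInf x.1.1 → (∀ k, x.1.1 (k + p) = x.1.1 k) →
      ∀ (k : ℕ) (c : A), x.1.1 k = some c → (phi x).1.1 k = some (e c) := by
    intro x hinf hper k c hkc
    have hXinf : x.1.1 ∈ XFinf (FF a1 a2) := hXinfOf x hinf
    have hmj : shiftN (k+1) x.1 ∈ XX a1 a2 := hmemN (k+1) x
    set xj : ↥(XX a1 a2) := ⟨shiftN (k+1) x.1, hmj⟩ with hxjdef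
    have hinfj : IsInf xj.1.1 := fun n => hinf (n + (k+1))
    have hperj : ∀ n, xj.1.1 (n + p) = xj.1.1 n := by
      intro n
      show x.1.1 (n + p + (k+1)) = x.1.1 (n + (k+1))
      have h0 : n + p + (k+1) = (n + (k+1)) + p := by omega
      rw [h0, hper]
    set w : List A := List.ofFn
      (fun i : Fin p => (x.1.1 (i + (k+1))).get
        (Option.ne_none_iff_isSome.mp (hinf (i + (k+1))))) with hwdef
    have hwlen : w.length = p := List.length_ofFn
    have hwx : ∀ i (h : i < w.length), x.1.1 (i + (k+1)) = some (w.get ⟨i, h⟩) := by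
      intro i h
      rw [List.get_eq_getElem]
      simp only [hwdef, List.getElem_ofFn]
      exact (Option.some_get _).symm
    have htr : trunc p xj.1.1 = ofList w := by
      funext n
      by_cases h : n < p
      · show (if n < p then x.1.1 (n + (k+1)) else none) = _
        rw [if_pos h]
        rw [ofList]
        rw [dif_pos (show n < w.length by omega)]
        exact hwx n (by omega)
      · show (if n < p then x.1.1 (n + (k+1)) else none) = _
        rw [if_neg h]
        rw [ofList]
        rw [dif_neg (show ¬ n < w.length by omega)]
    have hwXF : ofList w ∈ XF (FF a1 a2) := by
      apply word_mem_XF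
      intro i h1 h2
      rintro ⟨hg1, hg2⟩
      have hb1 : x.1.1 (i + (k+1)) = some a1 := by rw [hwx i h1, hg1]
      have hb2 : x.1.1 (i + 1 + (k+1)) = some a1 ∨ x.1.1 (i + 1 + (k+1)) = some a2 := by
        rcases hg2 with hg2 | hg2
        · exact Or.inl (by rw [hwx (i+1) h2, hg2])
        · exact Or.inr (by rw [hwx (i+1) h2, hg2])
      have harith : i + (k+1) + 1 = i + 1 + (k+1) := by omega
      rcases hb2 with hb2 | hb2
      · refine hXinf.2 [a1, a1] (Or.inl rfl) (i + (k+1)) ?_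
        intro l hl
        rcases l with _ | _ | l
        · exact hb1
        · show x.1.1 (i + (k+1) + 1) = _
          rw [harith, hb2]
          rfl
        · exact absurd hl (by simp only [List.length_cons, List.length_nil]; omega)
      · refine hXinf.2 [a1, a2] (Or.inr rfl) (i + (k+1)) ?_
        intro l hl
        rcases l with _ | _ | l
        · exact hb1
        · show x.1.1 (i + (k+1) + 1) = _
          rw [harith, hb2]
          rfl
        · exact absurd hl (by simp only [List.length_cons, List.length_nil]; omega)
    have hmtr : (⟨trunc p xj.1.1, trunc_mem xj.1.2 p⟩ : ↥(FullShift A)) ∈ XX a1 a2 := by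
      show trunc p xj.1.1 ∈ XF (FF a1 a2)
      rw [htr]
      exact hwXF
    have hevj := hev xj hinfj hperj hmtr (p-1) (by omega)
    have hphitr : phi (⟨⟨trunc p xj.1.1, trunc_mem xj.1.2 p⟩, hmtr⟩ : ↥(XX a1 a2)) =
        phi ⟨⟨ofList w, ofList_mem w⟩, hwXF⟩ := phic _ _ htr
    have hl := hlast w hwXF hwlen (by omega)
    have hcc : w.get ⟨p-1, by omega⟩ = c := by
      have h5 := hwx (p-1) (by omega)
      rw [show p - 1 + (k+1) = k + p from by omega, hper k, hkc] at h5
      exact (Option.some_injective _ h5).symm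
    have h6 : (phi xj).1.1 (p-1) = (phi x).1.1 (p - 1 + (k+1)) := hphiN (k+1) x hmj (p-1)
    calc (phi x).1.1 k
        = (phi x).1.1 (k + p) := (hper_phi x hper k).symm
      _ = (phi x).1.1 (p - 1 + (k+1)) := by rw [show p - 1 + (k+1) = k + p from by omega]
      _ = (phi xj).1.1 (p-1) := h6.symm
      _ = (phi (⟨⟨trunc p xj.1.1, trunc_mem xj.1.2 p⟩, hmtr⟩ : ↥(XX a1 a2))).1.1 (p-1) := hevj.symm
      _ = (phi ⟨⟨ofList w, ofList_mem w⟩, hwXF⟩).1.1 (p-1) := by rw [hphitr]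
      _ = some (e (w.get ⟨p-1, by omega⟩)) := hl
      _ = some (e c) := by rw [hcc]
  -- pick a letter b ∉ {a1, a2}
  obtain ⟨b, hbmem⟩ := Infinite.exists_notMem_finset ({a1, a2} : Finset A)
  have hb1 : b ≠ a1 := by intro h; apply hbmem; simp [h]
  have hb2 : b ≠ a2 := by intro h; apply hbmem; simp [h]
  -- the periodic point x1 = (a1 b^(p-1))^∞
  set s1 : ℕ → Option A := fun n => some (if n % p = 0 then a1 else b) with hs1def
  have s1mem : s1 ∈ FullShift A := fun n hn => by simp [hs1def] at hn
  have hs1per : ∀ k, s1 (k + p) = s1 k := by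
    intro k
    simp [hs1def, Nat.add_mod_right]
  have hs1inf : IsInf s1 := fun n => by simp [hs1def]
  have hs1succ : ∀ k, k % p = 0 → s1 (k+1) = some b := by
    intro k hk
    obtain ⟨m, rfl⟩ := Nat.dvd_of_mod_eq_zero hk
    have h1 : (p * m + 1) % p = 1 % p := Nat.mul_add_mod p m 1
    have h2 : 1 % p = 1 := Nat.mod_eq_of_lt (by omega)
    simp only [hs1def]
    rw [h1, h2]
    simp [show (1:ℕ) ≠ 0 from one_ne_zero]
  have hs1XF : s1 ∈ XFinf (FF a1 a2) := by
    refine ⟨hs1inf, ?_⟩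
    rintro v hv k hB
    have h0 : s1 k = some a1 := by
      have := hB 0 (by rcases hv with rfl | rfl <;> norm_num)
      rcases hv with rfl | rfl <;> simpa using this
    have hkmod : k % p = 0 := by
      by_contra hm
      simp only [hs1def, if_neg hm, Option.some_inj] at h0
      exact hb1 h0
    have h1 := hs1succ k hkmod
    have h2t : s1 (k + 1) = some a1 ∨ s1 (k + 1) = some a2 := by
      rcases hv with rfl | rfl
      · exact Or.inl (by have := hB 1 (by norm_num); simpa using this)
      · exact Or.inr (by have := hB 1 (by norm_num); simpa using this)
    rw [h1] at h2t
    rcases h2t with h | h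
    · exact hb1 (Option.some_injective _ h)
    · exact hb2 (Option.some_injective _ h)
  have hx1X : (⟨s1, s1mem⟩ : ↥(FullShift A)) ∈ XX a1 a2 := Or.inl hs1XF
  set x1 : ↥(XX a1 a2) := ⟨⟨s1, s1mem⟩, hx1X⟩ with hx1def
  have hx1v0 : s1 0 = some a1 := by simp [hs1def, Nat.zero_mod]
  have hx1v1 : s1 1 = some b := hs1succ 0 (Nat.zero_mod p)
  have hx1vp1 : s1 (p-1) = some b := by
    have h1 : (p-1) % p = p - 1 := Nat.mod_eq_of_lt (by omega)
    simp only [hs1def, h1]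
    rw [if_neg (by omega)]
  have hx1vp : s1 p = some a1 := by
    simp [hs1def, Nat.mod_self]
  -- image values
  have hph10 : (phi x1).1.1 0 = some (e a1) := hmain x1 hs1inf hs1per 0 a1 hx1v0
  have hph11 : (phi x1).1.1 1 = some (e b) := hmain x1 hs1inf hs1per 1 b hx1v1
  have hph1p1 : (phi x1).1.1 (p-1) = some (e b) := hmain x1 hs1inf hs1per (p-1) b hx1vp1
  have hph1p : (phi x1).1.1 p = some (e a1) := hmain x1 hs1inf hs1per p a1 hx1vp
  -- phi x1 is an infinite path
  have hph1inf : IsInf (phi x1).1.1 := by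
    rw [← len_eq_top_iff]
    rw [hc.len_eq x1]
    exact len_eq_top_iff.mpr hs1inf
  have hg1 := mem_ginf_of_isInf G.toUltragraph (phi x1).2 hph1inf
  have eq1 : G.s (e b) = G.r (e a1) := by
    have := hg1.2 0 (e a1) (e b) hph10 hph11
    simpa [DirGraph.toUltragraph] using this
  have eq2 : G.s (e a1) = G.r (e b) := by
    have hnext : (phi x1).1.1 (p - 1 + 1) = some (e a1) := by
      rw [show p - 1 + 1 = p from by omega]
      exact hph1p
    have := hg1.2 (p-1) (e b) (e a1) hph1p1 hnext
    simpa [DirGraph.toUltragraph] using this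
  -- the constant point x2 = b^∞
  set s2 : ℕ → Option A := fun _ => some b with hs2def
  have s2mem : s2 ∈ FullShift A := fun n hn => by simp [hs2def] at hn
  have hs2inf : IsInf s2 := fun n => by simp [hs2def]
  have hs2XF : s2 ∈ XFinf (FF a1 a2) := by
    refine ⟨hs2inf, ?_⟩
    rintro v hv k hB
    have h0 : s2 k = some a1 := by
      have := hB 0 (by rcases hv with rfl | rfl <;> norm_num)
      rcases hv with rfl | rfl <;> simpa using this
    exact hb1 (Option.some_injective _ h0)
  have hx2X : (⟨s2, s2mem⟩ : ↥(FullShift A)) ∈ XX a1 a2 := Or.inl hs2XF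
  set x2 : ↥(XX a1 a2) := ⟨⟨s2, s2mem⟩, hx2X⟩ with hx2def
  have hs2per : ∀ k, s2 (k + p) = s2 k := fun k => rfl
  have hph20 : (phi x2).1.1 0 = some (e b) := hmain x2 hs2inf hs2per 0 b rfl
  have hph21 : (phi x2).1.1 1 = some (e b) := hmain x2 hs2inf hs2per 1 b rfl
  have hph2inf : IsInf (phi x2).1.1 := by
    rw [← len_eq_top_iff]
    rw [hc.len_eq x2]
    exact len_eq_top_iff.mpr hs2inf
  have hg2 := mem_ginf_of_isInf G.toUltragraph (phi x2).2 hph2inf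
  have eq3 : G.s (e b) = G.r (e b) := by
    have := hg2.2 0 (e b) (e b) hph20 hph21
    simpa [DirGraph.toUltragraph] using this
  -- the loop at e a1
  have hloop : G.s (e a1) = G.r (e a1) := by
    rw [eq2, ← eq3, eq1]
  -- the constant infinite path z = (e a1)^∞
  set z : ℕ → Option E := fun _ => some (e a1) with hzdef
  have zmem : z ∈ FullShift E := fun n hn => by simp [hzdef] at hn
  have hzginf : z ∈ Ginf G.toUltragraph := by
    refine ⟨fun n => by simp [hzdef], ?_⟩
    intro n e' f' h1 h2
    have he' : e' = e a1 := by
      have : some (e a1) = some e' := h1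
      exact (Option.some_injective _ this).symm
    have hf' : f' = e a1 := by
      have : some (e a1) = some f' := h2
      exact (Option.some_injective _ this).symm
    subst he'
    subst hf'
    show G.s (e a1) ∈ ({G.r (e a1)} : Set V)
    rw [Set.mem_singleton_iff]
    exact hloop
  have hzY : (⟨z, zmem⟩ : ↥(FullShift E)) ∈ edgeShift G.toUltragraph :=
    subset_closure hzginf
  -- pull back by surjectivity
  obtain ⟨xs, hxs⟩ := hc.bijective.2 ⟨⟨z, zmem⟩, hzY⟩
  have hxsval : (phi xs).1.1 = z := by rw [hxs]
  have hxsinf : IsInf xs.1.1 := by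
    rw [← len_eq_top_iff, ← hc.len_eq xs, hxsval]
    exact len_eq_top_iff.mpr (fun n => by simp [hzdef])
  -- xs is shift-invariant
  have hsc := hc.shift_comm xs
  have hshz : shiftMap (phi xs).1 = (phi xs).1 := by
    apply Subtype.ext
    funext n
    show (phi xs).1.1 (n+1) = (phi xs).1.1 n
    rw [hxsval]
  have h7 : phi ⟨shiftMap xs.1, hc.shiftInvX xs⟩ = phi xs :=
    Subtype.ext (by rw [hsc, hshz])
  have h8 := hc.bijective.1 h7
  have hstep : ∀ n, xs.1.1 (n+1) = xs.1.1 n :=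
    fun n => congrFun (congrArg (fun t => t.1.1) h8) n
  have hconstv : ∀ n, xs.1.1 n = xs.1.1 0 := by
    intro n
    induction n with
    | zero => rfl
    | succ m ih => rw [hstep m, ih]
  obtain ⟨c, hc0⟩ := Option.ne_none_iff_exists'.mp (hxsinf 0)
  have hcall : ∀ n, xs.1.1 n = some c := fun n => by rw [hconstv n, hc0]
  have hcper : ∀ k, xs.1.1 (k + p) = xs.1.1 k := fun k => by rw [hcall, hcall]
  have hval := hmain xs hxsinf hcper 0 c hc0
  have hece : e c = e a1 := by
    rw [hxsval] at hval
    have : some (e a1) = some (e c) := hval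
    exact (Option.some_injective _ this).symm
  have hceq : c = a1 := hEinj c a1 hece
  -- but xs avoids a1 a1, contradiction
  have hxsXinf : xs.1.1 ∈ XFinf (FF a1 a2) := hXinfOf xs hxsinf
  refine hxsXinf.2 [a1, a1] (Or.inl rfl) 0 ?_
  intro i hi
  subst hceq
  rcases i with _ | _ | i
  · exact hcall _
  · exact hcall _
  · exact absurd hi (by simp only [List.length_cons, List.length_nil]; omega)


end OTW
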